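/- arXiv:2012.04158 — 2 statements merged into one kernel-verified Lean document; each statement's English description precedes it below -/
import Mathlib

section
/- Define κ_N = 0 and, for 1 ≤ i ≤ N-1, κ_i = (N - i) + (N - i - 1)·κ_{i+1}. Then κ_1 = (N-2)! · ∑_{i=1}^{N-1} i²/i! for all integers N ≥ 2. -/
theorem kappa_closed_form (N : ℕ) (hN : 2 ≤ N) (κ : ℕ → ℝ)
    (h0 : κ N = 0)
    (hrec : ∀ i : ℕ, 1 ≤ i → i ≤ N - 1 →
      κ i = ((N : ℝ) - i) + ((N : ℝ) - i - 1) * κ (i + 1)) :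
    κ 1 = (N - 2).factorial * ∑ i ∈ Finset.Icc 1 (N - 1), ((i : ℝ) ^ 2 / i.factorial) := by
  have key : ∀ m : ℕ, m ≤ N - 1 →
      κ (N - m) = ((m - 1).factorial : ℝ) * ∑ i ∈ Finset.Icc 1 m, ((i : ℝ) ^ 2 / i.factorial) := by
    intro m
    induction m with
    | zero => intro _; simp [h0]
    | succ m ih =>
      intro hm
      have hm' : m ≤ N - 1 := Nat.le_of_succ_le hm
      have h1 : 1 ≤ N - (m + 1) := by omega
      have h2 : N - (m + 1) ≤ N - 1 := by omega
      have h3 : N - (m + 1) + 1 = N - m := by omega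
      have hcast : ((N - (m + 1) : ℕ) : ℝ) = (N : ℝ) - (m + 1) := by
        have : m + 1 ≤ N := by omega
        push_cast [Nat.cast_sub this]
        ring
      rw [hrec _ h1 h2, h3, ih hm', hcast]
      have hsum : ∑ i ∈ Finset.Icc 1 (m + 1), ((i : ℝ) ^ 2 / i.factorial)
          = (∑ i ∈ Finset.Icc 1 m, ((i : ℝ) ^ 2 / i.factorial))
            + ((m + 1 : ℕ) : ℝ) ^ 2 / ((m + 1).factorial : ℝ) := by
        rw [← Finset.sum_Icc_succ_top (by omega : 1 ≤ m + 1)]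
      rw [hsum]
      cases m with
      | zero => simp
      | succ k =>
        have hfact : ((k + 2).factorial : ℝ) = (k + 2) * ((k + 1).factorial : ℝ) := by
          push_cast [Nat.factorial_succ]; ring
        have hfpos : ((k + 2).factorial : ℝ) ≠ 0 := by positivity
        have hfpos' : ((k + 1).factorial : ℝ) ≠ 0 := by positivity
        have hfact2 : ((k + 1).factorial : ℝ) = (k + 1) * (k.factorial : ℝ) := by
          push_cast [Nat.factorial_succ]; ring
        simp only [Nat.add_sub_cancel, Nat.factorial_succ, Nat.cast_mul]
        field_simp
        push_cast
        ring
  have hk := key (N - 1) le_rfl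
  rw [show N - (N - 1) = 1 by omega, show N - 1 - 1 = N - 2 by omega] at hk
  exact hk
end

section
/- Define the sequence κ_i by κ_N = 0 and κ_i = (N-i) + (N-i-1)·κ_{i+1} for 1 ≤ i ≤ N-1. Then for all N ≥ 2, κ_1 < 6·(N-2)!. -/
noncomputable def gaux : ℕ → ℝ
  | 0 => 12
  | 1 => 10
  | (n+2) => (n+1) * gaux (n+1) - 2*(n+2)

lemma gaux_ge_six : ∀ j : ℕ, 1 ≤ j → (6:ℝ) ≤ gaux j := by
  intro j hj
  induction j with
  | zero => omega
  | succ n ih =>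
    match n, ih with
    | 0, _ => norm_num [gaux]
    | 1, _ => norm_num [gaux]
    | (m+2), ih =>
      have h := ih (by omega)
      have heq : gaux (m+3) = ((m+2:ℕ):ℝ) * gaux (m+2) - 2*((m+3:ℕ):ℝ) := by rw [show m+3 = (m+1)+2 from rfl, gaux]; push_cast; ring
      push_cast at heq
      rw [heq]
      have hm : (0:ℝ) ≤ (m:ℝ) := Nat.cast_nonneg m
      nlinarith [h, hm]

theorem kappa_lt_six_factorial (N : ℕ) (hN : 2 ≤ N) (κ : ℕ → ℝ)
    (h0 : κ N = 0)
    (hrec : ∀ i : ℕ, 1 ≤ i → i ≤ N - 1 →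
      κ i = ((N : ℝ) - i) + ((N : ℝ) - i - 1) * κ (i + 1)) :
    κ 1 < 6 * (N - 2).factorial := by
  have key : ∀ j : ℕ, 1 ≤ j → j ≤ N - 1 →
      2 * κ (N - j) + gaux j ≤ 12 * ((j-1).factorial : ℝ) := by
    intro j hj
    induction j, hj using Nat.le_induction with
    | base =>
      intro _
      have h1 := hrec (N-1) (by omega) (le_refl _)
      have hc : ((N-1:ℕ):ℝ) = (N:ℝ) - 1 := by
        have : 1 ≤ N := by omega
        push_cast [this]; ring
      have hidx : N - 1 + 1 = N := by omega
      rw [hidx, hc, h0] at h1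
      have h1' : κ (N-1) = 1 := by rw [h1]; ring
      rw [h1']
      norm_num [gaux]
    | succ j hj ih =>
      intro hle
      have IH := ih (by omega)
      have hr := hrec (N-(j+1)) (by omega) (by omega)
      have hcast : ((N - (j+1) : ℕ) : ℝ) = (N:ℝ) - ((j:ℝ)+1) := by
        have : j+1 ≤ N := by omega
        push_cast [this]; ring
      have hidx : N - (j+1) + 1 = N - j := by omega
      rw [hidx, hcast] at hr
      have hr' : κ (N-(j+1)) = ((j:ℝ)+1) + (j:ℝ) * κ (N-j) := by
        rw [hr]; ring
      have hg : gaux (j+1) = (j:ℝ) * gaux j - 2*((j:ℝ)+1) := by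
        obtain ⟨m, rfl⟩ : ∃ m, j = m + 1 := ⟨j-1, by omega⟩
        have heq : gaux (m+1+1) = ((m+1:ℕ):ℝ) * gaux (m+1) - 2*((m+2:ℕ):ℝ) := by rw [show m+1+1 = m+2 from rfl, gaux]; push_cast; ring
        push_cast at heq ⊢
        rw [heq]; ring
      have hfac : ((j+1-1).factorial : ℝ) = (j:ℝ) * ((j-1).factorial : ℝ) := by
        obtain ⟨m, rfl⟩ : ∃ m, j = m + 1 := ⟨j-1, by omega⟩
        simp [Nat.factorial_succ]
        try push_cast
        try ring
      rw [hr', hg, hfac]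
      have hjpos : (0:ℝ) ≤ (j:ℝ) := Nat.cast_nonneg j
      nlinarith [IH, hjpos]
  have h1 : N - (N-1) = 1 := by omega
  have hk := key (N-1) (by omega) (le_refl _)
  rw [h1] at hk
  have h2 : N-1-1 = N-2 := by omega
  rw [h2] at hk
  have hg6 := gaux_ge_six (N-1) (by omega)
  linarith
end
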